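/- (Birman–Schwinger correspondence, direction i) Suppose μ > 0, z > sup of the essential spectrum of H_μ(K), and f ∈ L^{2,a}((T^d)²) satisfies H_μ(K)f = zf with φ(p) := ∫ f(p,t)η(dt). Then f(p,q) = -μ[φ(p)-φ(q)]/(E(K;p,q)-z), and φ satisfies the one-dimensional integral equation φ(p)·[1 + μ∫ η(dt)/(E(K;p,t)-z)] = μ∫ φ(q)η(dq)/(E(K;p,q)-z) for a.e. p. -/

import Mathlib

/-!
By antisymmetry `∫ f(t,q) η(dt) = -φ(q)`, so the eigenvalue equation is a pointwise linear
equation for `f(p,q)`, solved by dividing by `E(K;p,q) - z ≠ 0`. Integrating that formula in `q`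
gives the equation for `φ`; the integrals split because `(E(K;p,·) - z)⁻¹` is continuous on the
compact torus, hence bounded, and `φ` is integrable since `f ∈ L²` of a finite measure.
-/

open MeasureTheory Real

instance : Fact (0 < 2 * π) := ⟨by positivity⟩

/-- Equip the circle `ℝ/2πℤ` with its Haar measure. -/
noncomputable instance : MeasureSpace Real.Angle :=
  inferInstanceAs (MeasureSpace (AddCircle (2 * π)))

instance : SigmaFinite (volume : Measure Real.Angle) :=
  inferInstanceAs (SigmaFinite (volume : Measure (AddCircle (2 * π))))

/-- The lattice dispersion relation `ε(p) = 2∑ᵢ (1 - cos pⁱ)` on the torus `T^d`. -/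
noncomputable def eps (d : ℕ) (p : Fin d → Real.Angle) : ℝ :=
  2 * ∑ i, (1 - (p i).cos)

/-- The normalized Haar measure `η` on the torus `T^d`. -/
noncomputable def haarT (d : ℕ) : Measure (Fin d → Real.Angle) :=
  (ENNReal.ofReal ((2 * π) ^ d))⁻¹ • volume

/-- The three-particle dispersion `E(K;p,q) = ε(p) + ε(q) + γ ε(K - p - q)`. -/
noncomputable def Edisp (d : ℕ) (γ : ℝ) (K p q : Fin d → Real.Angle) : ℝ :=
  eps d p + eps d q + γ * eps d (K - p - q)

section Kernel

variable {X : Type*} [MeasurableSpace X] {η : Measure X}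

theorem integral_left_eq_neg_integral_right_of_antisymm {f : X × X → ℝ}
    (hfa : ∀ p q, f (p, q) = -f (q, p)) (q : X) :
    ∫ t, f (t, q) ∂η = -∫ t, f (q, t) ∂η := by
  rw [← integral_neg]
  exact integral_congr_ae (ae_of_all _ fun t => hfa t q)

theorem ae_eq_neg_mul_div_of_eigen {ν : Measure (X × X)} {E : X → X → ℝ} {f : X × X → ℝ}
    {μ z : ℝ} (hE : ∀ p q, E p q ≠ z) (hfa : ∀ p q, f (p, q) = -f (q, p))
    (heig : ∀ᵐ x ∂ν, E x.1 x.2 * f x + μ * ((∫ t, f (x.1, t) ∂η) + ∫ t, f (t, x.2) ∂η)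
      = z * f x) :
    ∀ᵐ x ∂ν, f x = -μ * ((∫ t, f (x.1, t) ∂η) - ∫ t, f (x.2, t) ∂η) / (E x.1 x.2 - z) := by
  filter_upwards [heig] with x hx
  rw [integral_left_eq_neg_integral_right_of_antisymm hfa] at hx
  rw [eq_div_iff (sub_ne_zero.2 (hE x.1 x.2))]
  linear_combination hx

theorem mul_one_add_integral_inv_eq_of_eq_integral [IsFiniteMeasure η] {φ r : X → ℝ}
    {a μ C : ℝ} (hφ : Integrable φ η) (hr : AEStronglyMeasurable (fun q => (r q)⁻¹) η)
    (hC : ∀ q, ‖(r q)⁻¹‖ ≤ C) (h : a = ∫ q, -μ * (a - φ q) / r q ∂η) :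
    a * (1 + μ * ∫ q, (r q)⁻¹ ∂η) = μ * ∫ q, φ q / r q ∂η := by
  have hinv : Integrable (fun q => (r q)⁻¹) η := .of_bound hr C (ae_of_all _ hC)
  have hφr : Integrable (fun q => φ q / r q) η := by
    simpa only [div_eq_mul_inv, mul_comm] using hφ.bdd_mul hr (ae_of_all _ hC)
  have hsplit : ∫ q, -μ * (a - φ q) / r q ∂η
      = -μ * a * ∫ q, (r q)⁻¹ ∂η + μ * ∫ q, φ q / r q ∂η := by
    calc ∫ q, -μ * (a - φ q) / r q ∂η
        = ∫ q, (-μ * a * (r q)⁻¹ + μ * (φ q / r q)) ∂η :=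
          integral_congr_ae (ae_of_all _ fun q => by ring)
      _ = -μ * a * ∫ q, (r q)⁻¹ ∂η + μ * ∫ q, φ q / r q ∂η := by
          rw [integral_add (hinv.const_mul _) (hφr.const_mul _), integral_const_mul,
            integral_const_mul]
  linear_combination h + hsplit

end Kernel

instance : CompactSpace Real.Angle := inferInstanceAs (CompactSpace (AddCircle (2 * π)))

instance : BorelSpace Real.Angle := inferInstanceAs (BorelSpace (AddCircle (2 * π)))

instance : IsFiniteMeasure (volume : Measure Real.Angle) :=
  inferInstanceAs (IsFiniteMeasure (volume : Measure (AddCircle (2 * π))))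

instance (d : ℕ) : IsFiniteMeasure (haarT d) :=
  Measure.smul_finite _ (ENNReal.inv_ne_top.2 (by simp; positivity))

theorem continuous_eps (d : ℕ) : Continuous (eps d) := by
  have := Real.Angle.continuous_cos
  unfold eps
  fun_prop

theorem continuous_Edisp (d : ℕ) (γ : ℝ) (K : Fin d → Real.Angle) :
    Continuous fun x : (Fin d → Real.Angle) × (Fin d → Real.Angle) => Edisp d γ K x.1 x.2 := by
  have := continuous_eps d
  unfold Edisp
  fun_prop

theorem stmt11_general (d : ℕ) (γ μ z : ℝ) (K : Fin d → Real.Angle)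
    (hz1 : ∀ p q, Edisp d γ K p q < z)
    (f : (Fin d → Real.Angle) × (Fin d → Real.Angle) → ℝ)
    (hfL2 : MemLp f 2 ((haarT d).prod (haarT d)))
    (hfa : ∀ p q, f (p, q) = -f (q, p))
    (heig : ∀ᵐ x ∂((haarT d).prod (haarT d)),
      Edisp d γ K x.1 x.2 * f x
        + μ * ((∫ t, f (x.1, t) ∂(haarT d)) + ∫ t, f (t, x.2) ∂(haarT d)) = z * f x) :
    (∀ᵐ x ∂((haarT d).prod (haarT d)),
      f x = -μ * ((∫ t, f (x.1, t) ∂(haarT d)) - ∫ t, f (x.2, t) ∂(haarT d))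
              / (Edisp d γ K x.1 x.2 - z)) ∧
    (∀ᵐ p ∂(haarT d),
      (∫ t, f (p, t) ∂(haarT d)) * (1 + μ * ∫ t, (Edisp d γ K p t - z)⁻¹ ∂(haarT d))
        = μ * ∫ q, (∫ t, f (q, t) ∂(haarT d)) / (Edisp d γ K p q - z) ∂(haarT d)) := by
  have hE : ∀ p q, Edisp d γ K p q ≠ z := fun p q => (hz1 p q).ne
  have hf := ae_eq_neg_mul_div_of_eigen hE hfa heig
  refine ⟨hf, ?_⟩
  have hφ : Integrable (fun p => ∫ t, f (p, t) ∂(haarT d)) (haarT d) :=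
    (hfL2.integrable one_le_two).integral_prod_left
  have hR : Continuous fun x : (Fin d → Real.Angle) × (Fin d → Real.Angle) =>
      (Edisp d γ K x.1 x.2 - z)⁻¹ :=
    ((continuous_Edisp d γ K).sub continuous_const).inv₀ fun x => sub_ne_zero.2 (hE x.1 x.2)
  obtain ⟨C, hC⟩ := isCompact_univ.exists_bound_of_continuousOn hR.continuousOn
  filter_upwards [Measure.ae_ae_of_ae_prod hf] with p hp
  exact mul_one_add_integral_inv_eq_of_eq_integral hφ
    (hR.comp (Continuous.prodMk_right p)).aestronglyMeasurable
    (fun q => hC (p, q) (Set.mem_univ _)) (integral_congr_ae hp)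

/-- Birman–Schwinger, direction i: if `H_μ(K)f = zf` with `z` above the
essential spectrum (so `E(K;p,q) < z` and `Δ_μ(K,p;z) > 0`), then with
`φ(p) = ∫ f(p,t)η(dt)` one has `f(p,q) = -μ[φ(p)-φ(q)]/(E(K;p,q)-z)` and
`φ(p)·Δ_μ(K,p;z) = μ∫ φ(q)η(dq)/(E(K;p,q)-z)`. -/
theorem stmt11 (d : ℕ) (γ μ z : ℝ) (hγ : 0 < γ) (hμ : 0 < μ) (K : Fin d → Real.Angle)
    (hz1 : ∀ p q, Edisp d γ K p q < z)
    (hz2 : ∀ p, 0 < 1 + μ * ∫ t, (Edisp d γ K p t - z)⁻¹ ∂(haarT d))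
    (f : (Fin d → Real.Angle) × (Fin d → Real.Angle) → ℝ)
    (hfL2 : MemLp f 2 ((haarT d).prod (haarT d)))
    (hfa : ∀ p q, f (p, q) = -f (q, p))
    (heig : ∀ᵐ x ∂((haarT d).prod (haarT d)),
      Edisp d γ K x.1 x.2 * f x
        + μ * ((∫ t, f (x.1, t) ∂(haarT d)) + ∫ t, f (t, x.2) ∂(haarT d)) = z * f x) :
    (∀ᵐ x ∂((haarT d).prod (haarT d)),
      f x = -μ * ((∫ t, f (x.1, t) ∂(haarT d)) - ∫ t, f (x.2, t) ∂(haarT d))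
              / (Edisp d γ K x.1 x.2 - z)) ∧
    (∀ᵐ p ∂(haarT d),
      (∫ t, f (p, t) ∂(haarT d)) * (1 + μ * ∫ t, (Edisp d γ K p t - z)⁻¹ ∂(haarT d))
        = μ * ∫ q, (∫ t, f (q, t) ∂(haarT d)) / (Edisp d γ K p q - z) ∂(haarT d)) :=
  stmt11_general d γ μ z K hz1 f hfL2 hfa heig
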